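/- Let Ψ be a real symmetric n×n matrix indexed by a quasi-uniform set D_n ⊂ ℝ^d, with N = ⌊n^{1/d}⌋, and suppose |Ψ_{s,t}| ≤ C (1 + N‖s−t‖₂)^{−(d+ζ)} for all s,t ∈ D_n, where C > 0 is bounded and ζ ≥ 0. Then there exist bounded constants A, A' > 0 (depending only on C, d, ζ and the quasi-uniformity constants) such that (1) the operator norm satisfies ‖Ψ‖_{2→2} ≤ A (1 + [ζ = 0]·log n), and (2) the Frobenius norm satisfies ‖Ψ‖_F ≤ A' √n. (Lemma C.2: norm bounds for symmetric matrices with polynomially decaying off-diagonals.) -/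

import Mathlib

open MeasureTheory ProbabilityTheory Filter Matrix BoundedContinuousFunction
open scoped BigOperators ENNReal NNReal Topology Classical

noncomputable section

/-- Points of `ℝ^d` with the Euclidean structure. -/
abbrev Pt (d : ℕ) := EuclideanSpace ℝ (Fin d)

/-- `N = ⌊n^(1/d)⌋`. -/
def Nof (d n : ℕ) : ℕ := Nat.floor ((n : ℝ) ^ ((1 : ℝ) / (d : ℝ)))

/-- Quasi-uniformity of the `n`-point sampling set `D ⊂ ℝ^d`: for every `s ∈ D` there is an
enumeration of `D \ {s}` which is monotone in the distance to `s` (so that its `i`-th element is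
the `i`-th nearest neighbour of `s`), whose distances obey the two-sided bound
`Cmin (i/n)^{1/d} ≤ r_{s,i} ≤ Cmax (i/n)^{1/d}`. -/
def QuasiUniform (d n : ℕ) (Cmin Cmax : ℝ) (D : Finset (Pt d)) : Prop :=
  D.card = n ∧
  ∀ s ∈ D, ∃ g : Fin (n - 1) → Pt d,
    (∀ i, g i ∈ D.erase s) ∧ Function.Injective g ∧
    (∀ t ∈ D.erase s, ∃ i, g i = t) ∧
    (∀ i j : Fin (n - 1), i ≤ j → dist s (g i) ≤ dist s (g j)) ∧
    (∀ i : Fin (n - 1),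
      Cmin * (((i : ℕ) + 1 : ℝ) / (n : ℝ)) ^ ((1 : ℝ) / (d : ℝ)) ≤ dist s (g i) ∧
      dist s (g i) ≤ Cmax * (((i : ℕ) + 1 : ℝ) / (n : ℝ)) ^ ((1 : ℝ) / (d : ℝ)))

/-- Preconditioning neighbourhoods `nb` and coefficients `a` of order `m` for the set `D`:
each `N_m(s) = nb s` lies in `D` within distance `c₀/N` of `s`; the coefficients annihilate all
monomials `(t-s)^r` with `|r|₁ < m`, do not annihilate some monomial with `|r|₁ ≥ m`, and are
normalized in Euclidean norm. -/
def PrecondCoeffs (d m : ℕ) (c₀ : ℝ) (N : ℕ) (D : Finset (Pt d))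
    (nb : Pt d → Finset (Pt d)) (a : Pt d → Pt d → ℝ) : Prop :=
  ∀ s ∈ D,
    nb s ⊆ D ∧
    (∀ t ∈ nb s, ‖t - s‖ ≤ c₀ / (N : ℝ)) ∧
    (∀ r : Fin d → ℕ, (∑ j, r j) < m →
      (∑ t ∈ nb s, a s t * ∏ j, (t j - s j) ^ r j) = 0) ∧
    (∃ r : Fin d → ℕ, m ≤ (∑ j, r j) ∧
      (∑ t ∈ nb s, a s t * ∏ j, (t j - s j) ^ r j) ≠ 0) ∧
    (∑ t ∈ nb s, (a s t) ^ 2) = 1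

/-- The Fourier filter `f^N_s(ω)` of the preconditioning coefficients. -/
def fN (d : ℕ) (ν : ℝ) (N : ℕ) (nb : Pt d → Finset (Pt d))
    (a : Pt d → Pt d → ℝ) (s ω : Pt d) : ℂ :=
  ((‖ω‖ ^ (-(ν + (d : ℝ) / 2)) : ℝ) : ℂ) *
    ∑ t ∈ nb s, ((a s t : ℝ) : ℂ) *
      Complex.exp (Complex.I * ((inner ℝ ((N : ℝ) • ω) (t - s) : ℝ) : ℂ))

/-- `h_N(x) = (1 + (Nx)^{-2})^{-(ν + d/2)}`. -/
def hN (d : ℕ) (ν : ℝ) (N : ℕ) (x : ℝ) : ℝ :=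
  (1 + ((N : ℝ) * x) ^ (-(2 : ℝ))) ^ (-(ν + (d : ℝ) / 2))

/-- The matrix `K_{n,m}(ρ)`, the `φ₀`-normalized covariance matrix of the preconditioned data,
given through its spectral representation. -/
def Kmat {d : ℕ} (ν : ℝ) (N : ℕ) (D : Finset (Pt d))
    (nb : Pt d → Finset (Pt d)) (a : Pt d → Pt d → ℝ) (ρ : ℝ) :
    Matrix D D ℝ :=
  Matrix.of fun s t =>
    ρ ^ (-(2 * ν)) *
      (∫ (ω : Pt d),
        Complex.exp (Complex.I * ((inner ℝ ((t : Pt d) - (s : Pt d)) ω : ℝ) : ℂ)) *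
          fN d ν N nb a (s : Pt d) ω * (starRingEnd ℂ) (fN d ν N nb a (t : Pt d) ω) *
          ((hN d ν N (ρ * ‖ω‖) : ℝ) : ℂ)).re

/-- Block-diagonal restriction of a matrix along the partition determined by a labelling `bin`. -/
def bdiag {d : ℕ} {D : Finset (Pt d)} (bin : Pt d → ℕ) (A : Matrix D D ℝ) :
    Matrix D D ℝ :=
  Matrix.of fun s t => if bin (s : Pt d) = bin (t : Pt d) then A s t else 0

/-- `L_{n,m}(ρ) = ρ^{2ν} K_{n,m}(ρ)`. -/
def Lmat {d : ℕ} (ν : ℝ) (N : ℕ) (D : Finset (Pt d))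
    (nb : Pt d → Finset (Pt d)) (a : Pt d → Pt d → ℝ) (ρ : ℝ) :
    Matrix D D ℝ :=
  ρ ^ (2 * ν) • Kmat ν N D nb a ρ

/-- `K^B_{n,m}(ρ)`: the block-diagonal approximation of `K_{n,m}(ρ)`. -/
def KmatB {d : ℕ} (ν : ℝ) (N : ℕ) (D : Finset (Pt d))
    (nb : Pt d → Finset (Pt d)) (a : Pt d → Pt d → ℝ) (bin : Pt d → ℕ) (ρ : ℝ) :
    Matrix D D ℝ := bdiag bin (Kmat ν N D nb a ρ)

/-- `L^B_{n,m}(ρ) = ρ^{2ν} K^B_{n,m}(ρ)`. -/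
def LmatB {d : ℕ} (ν : ℝ) (N : ℕ) (D : Finset (Pt d))
    (nb : Pt d → Finset (Pt d)) (a : Pt d → Pt d → ℝ) (bin : Pt d → ℕ) (ρ : ℝ) :
    Matrix D D ℝ := bdiag bin (Lmat ν N D nb a ρ)

/-- Euclidean norm of a finite-dimensional real vector. -/
def eNorm {ι : Type*} [Fintype ι] (v : ι → ℝ) : ℝ := Real.sqrt (∑ i, (v i) ^ 2)

/-- Frobenius norm of a real matrix. -/
def frobNorm {ι : Type*} [Fintype ι] (A : Matrix ι ι ℝ) : ℝ :=
  Real.sqrt (∑ i, ∑ j, (A i j) ^ 2)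

/-- The `ℓ² → ℓ²` operator (spectral) norm of a real matrix. -/
def opNorm {ι : Type*} [Fintype ι] (A : Matrix ι ι ℝ) : ℝ :=
  sSup {c : ℝ | ∃ v : ι → ℝ, eNorm v ≤ 1 ∧ c = eNorm (A.mulVec v)}

/-- The square root of a positive semidefinite matrix (as `Matrix.PosSemidef.sqrt` was defined
in Mathlib of December 2024, since removed; here only for real matrices, the case used below). -/
def Matrix.PosSemidef.sqrt {n : Type*} [Fintype n] [DecidableEq n]
    {A : Matrix n n ℝ} (hA : A.PosSemidef) : Matrix n n ℝ :=
  hA.1.eigenvectorUnitary.1 * diagonal ((↑) ∘ (√·) ∘ hA.1.eigenvalues) *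
    (star hA.1.eigenvectorUnitary : Matrix n n ℝ)

/-- The nuclear norm (sum of singular values): trace of the psd square root of `Aᵀ A`. -/
def nucNorm {ι : Type*} [Fintype ι] [DecidableEq ι] (A : Matrix ι ι ℝ) : ℝ :=
  (Matrix.posSemidef_conjTranspose_mul_self A).sqrt.trace

/-- The standard Gaussian product measure on `ι → ℝ`. -/
def stdGaussianPi (ι : Type*) [Fintype ι] : Measure (ι → ℝ) :=
  Measure.pi fun _ => gaussianReal 0 1

end

/-!
By Schur's test the spectral norm of the symmetric matrix `Ψ` is at most its largest absolute
row sum, and its Frobenius norm is at most `√n` times its largest row `ℓ²`-norm; so everything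
reduces to bounding `∑_{t ∈ D} (1 + N‖s - t‖)^{-p}` uniformly in `s`. Quasi-uniformity puts
the `i`-th nearest neighbour of `s` at distance at least `Cmin (i/n)^{1/d}`, and
`N ≥ n^{1/d}/2`, so the `i`-th term is at most `(Cmin/2)^{-p} i^{-p/d}`. For `p = d + ζ` with
`ζ > 0` this is a convergent `p`-series, for `ζ = 0` it is the harmonic sum `≤ 1 + log n`; the
squared entries decay with exponent `2(d + ζ) > d`, which gives the Frobenius bound.
-/

open Finset Real

section MatrixNorms

variable {ι : Type*} [Fintype ι]

theorem sq_mulVec_apply_le (A : Matrix ι ι ℝ) (v : ι → ℝ) (i : ι) :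
    (A *ᵥ v) i ^ 2 ≤ (∑ j, |A i j|) * ∑ j, |A i j| * v j ^ 2 :=
  sum_sq_le_sum_mul_sum_of_sq_le_mul _ (fun _ _ => abs_nonneg _)
    (fun _ _ => mul_nonneg (abs_nonneg _) (sq_nonneg _))
    fun j _ => le_of_eq (by rw [mul_pow, ← sq_abs (A i j)]; ring)

theorem opNorm_le_of_abs_row_col_sum_le (A : Matrix ι ι ℝ) {R : ℝ} (hR : 0 ≤ R)
    (hrow : ∀ i, ∑ j, |A i j| ≤ R) (hcol : ∀ j, ∑ i, |A i j| ≤ R) : opNorm A ≤ R := by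
  refine Real.sSup_le ?_ hR
  rintro _ ⟨v, hv, rfl⟩
  have hv : ∑ j, v j ^ 2 ≤ 1 := by rwa [eNorm, Real.sqrt_le_one] at hv
  have hsq : ∑ i, (A *ᵥ v) i ^ 2 ≤ R ^ 2 := calc
    ∑ i, (A *ᵥ v) i ^ 2 ≤ ∑ i, R * ∑ j, |A i j| * v j ^ 2 := by
      gcongr with i
      exact (sq_mulVec_apply_le A v i).trans (by gcongr; exact hrow i)
    _ = R * ∑ j, (∑ i, |A i j|) * v j ^ 2 := by
      rw [← mul_sum, sum_comm]; simp_rw [sum_mul]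
    _ ≤ R * ∑ j, R * v j ^ 2 := by gcongr with j; exact hcol j
    _ = R ^ 2 * ∑ j, v j ^ 2 := by rw [← mul_sum]; ring
    _ ≤ R ^ 2 := mul_le_of_le_one_right (sq_nonneg R) hv
  exact (Real.sqrt_le_sqrt hsq).trans_eq (Real.sqrt_sq hR)

theorem opNorm_le_of_isSymm_of_abs_row_sum_le {A : Matrix ι ι ℝ} (hA : A.IsSymm) {R : ℝ}
    (hR : 0 ≤ R) (hrow : ∀ i, ∑ j, |A i j| ≤ R) : opNorm A ≤ R :=
  opNorm_le_of_abs_row_col_sum_le A hR hrow fun j => by simpa only [hA.apply] using hrow j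

theorem frobNorm_le_of_sq_row_sum_le (A : Matrix ι ι ℝ) {B : ℝ}
    (hrow : ∀ i, ∑ j, A i j ^ 2 ≤ B) : frobNorm A ≤ √B * √(Fintype.card ι) := by
  rw [← Real.sqrt_mul' _ (Nat.cast_nonneg _), frobNorm]
  refine Real.sqrt_le_sqrt ((sum_le_sum fun i _ => hrow i).trans_eq ?_)
  rw [sum_const, card_univ, nsmul_eq_mul, mul_comm]

end MatrixNorms

theorem sum_range_rpow_neg_le_tsum {p : ℝ} (hp : 1 < p) (m : ℕ) :
    ∑ k ∈ range m, ((k : ℝ) + 1) ^ (-p) ≤ ∑' k : ℕ, ((k : ℝ) + 1) ^ (-p) := by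
  have hsum : Summable fun k : ℕ => ((k : ℝ) + 1) ^ (-p) :=
    ((summable_nat_add_iff 1).mpr (Real.summable_nat_rpow.mpr (neg_lt_neg hp))).congr
      fun k => by push_cast; rfl
  exact hsum.sum_le_tsum _ fun k _ => by positivity

theorem sum_range_pred_rpow_neg_one_le_one_add_log (n : ℕ) :
    ∑ k ∈ range (n - 1), ((k : ℝ) + 1) ^ (-1 : ℝ) ≤ 1 + log n := by
  have hharmonic : ∑ k ∈ range (n - 1), ((k : ℝ) + 1) ^ (-1 : ℝ) = harmonic (n - 1) := by
    simp [harmonic, Real.rpow_neg_one]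
  rw [hharmonic]
  refine (harmonic_le_one_add_log (n - 1)).trans ?_
  gcongr 1 + ?_
  rcases Nat.eq_zero_or_pos (n - 1) with h | h
  · rw [h, Nat.cast_zero, log_zero]
    exact log_natCast_nonneg n
  · exact log_le_log (by exact_mod_cast h) (by exact_mod_cast n.sub_le 1)

section QuasiUniform

variable {d n : ℕ}

theorem div_two_le_Nof (hn : 1 ≤ n) : (n : ℝ) ^ (1 / (d : ℝ)) / 2 ≤ Nof d n :=
  (Nat.div_two_lt_floor (one_le_rpow (by exact_mod_cast hn) (by positivity))).le

theorem one_add_Nof_mul_rpow_neg_le (hn : 1 ≤ n) {Cmin k r p : ℝ} (hCmin : 0 < Cmin)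
    (hk : 0 < k) (hp : 0 ≤ p) (hr : Cmin * (k / n) ^ (1 / (d : ℝ)) ≤ r) :
    (1 + Nof d n * r) ^ (-p) ≤ (Cmin / 2) ^ (-p) * k ^ (-(p / d)) := by
  have hn₀ : (0 : ℝ) < n := by exact_mod_cast hn
  have hr₀ : 0 ≤ r := (by positivity : 0 ≤ Cmin * (k / n) ^ (1 / (d : ℝ))).trans hr
  have hlower : Cmin / 2 * k ^ (1 / (d : ℝ)) ≤ 1 + Nof d n * r := calc
    Cmin / 2 * k ^ (1 / (d : ℝ))
        = Cmin * (k / n) ^ (1 / (d : ℝ)) * ((n : ℝ) ^ (1 / (d : ℝ)) / 2) := by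
      rw [div_rpow hk.le hn₀.le]
      field_simp
    _ ≤ r * Nof d n := by gcongr; exact div_two_le_Nof hn
    _ ≤ 1 + Nof d n * r := by linarith
  calc (1 + Nof d n * r) ^ (-p) ≤ (Cmin / 2 * k ^ (1 / (d : ℝ))) ^ (-p) :=
        rpow_le_rpow_of_nonpos (by positivity) hlower (neg_nonpos.mpr hp)
    _ = (Cmin / 2) ^ (-p) * k ^ (-(p / d)) := by
        rw [mul_rpow (by positivity) (by positivity), ← rpow_mul hk.le]
        ring_nf

theorem QuasiUniform.sum_rpow_neg_le {Cmin Cmax : ℝ} {D : Finset (Pt d)}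
    (hQ : QuasiUniform d n Cmin Cmax D) (hCmin : 0 < Cmin) {p : ℝ} (hp : 0 ≤ p) (s : D) :
    ∑ t : D, (1 + Nof d n * ‖(s : Pt d) - t‖) ^ (-p) ≤
      1 + (Cmin / 2) ^ (-p) * ∑ k ∈ range (n - 1), ((k : ℝ) + 1) ^ (-(p / d)) := by
  obtain ⟨hcard, hnbr⟩ := hQ
  obtain ⟨g, hg_mem, hg_inj, hg_surj, -, hg_dist⟩ := hnbr s s.2
  have hn : 1 ≤ n := hcard ▸ card_pos.mpr ⟨s, s.2⟩
  have hothers : ∑ t ∈ D.erase s, (1 + Nof d n * ‖(s : Pt d) - t‖) ^ (-p) =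
      ∑ i : Fin (n - 1), (1 + Nof d n * ‖(s : Pt d) - g i‖) ^ (-p) :=
    (sum_bij (fun i _ => g i) (fun i _ => hg_mem i) (fun _ _ _ _ h => hg_inj h)
      (fun t ht => (hg_surj t ht).imp fun i hi => ⟨mem_univ i, hi⟩) fun _ _ => rfl).symm
  rw [sum_coe_sort D fun t => (1 + Nof d n * ‖(s : Pt d) - t‖) ^ (-p),
    ← add_sum_erase _ _ s.2, hothers, sub_self, norm_zero, mul_zero, add_zero, one_rpow,
    mul_sum, ← Fin.sum_univ_eq_sum_range]
  gcongr with i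
  rw [← dist_eq_norm]
  exact one_add_Nof_mul_rpow_neg_le hn hCmin (by positivity) hp (hg_dist i).1

theorem exists_sum_rpow_neg_le_of_quasiUniform (hd : 1 ≤ d) {Cmin Cmax ζ : ℝ}
    (hCmin : 0 < Cmin) (hζ : 0 ≤ ζ) :
    ∃ K > 0, ∀ (n : ℕ) (D : Finset (Pt d)), QuasiUniform d n Cmin Cmax D → ∀ s : D,
      ∑ t : D, (1 + Nof d n * ‖(s : Pt d) - t‖) ^ (-((d : ℝ) + ζ)) ≤
        K * (1 + if ζ = 0 then log n else 0) := by
  have hd₀ : (0 : ℝ) < d := by exact_mod_cast hd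
  rcases hζ.eq_or_lt with rfl | hζ₀
  · refine ⟨1 + (Cmin / 2) ^ (-(d : ℝ)), by positivity, fun n D hQ s => ?_⟩
    have hsum := hQ.sum_rpow_neg_le hCmin (p := d) hd₀.le s
    rw [div_self hd₀.ne'] at hsum
    have hlog : 0 ≤ log n := log_natCast_nonneg n
    rw [add_zero, if_pos rfl]
    calc _ ≤ _ := hsum
      _ ≤ 1 + (Cmin / 2) ^ (-(d : ℝ)) * (1 + log n) := by
          gcongr; exact sum_range_pred_rpow_neg_one_le_one_add_log n
      _ ≤ (1 + (Cmin / 2) ^ (-(d : ℝ))) * (1 + log n) := by linarith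
  · set T := ∑' k : ℕ, ((k : ℝ) + 1) ^ (-(((d : ℝ) + ζ) / d))
    have hT : 0 ≤ T := tsum_nonneg fun _ => by positivity
    refine ⟨1 + (Cmin / 2) ^ (-((d : ℝ) + ζ)) * T, by positivity, fun n D hQ s => ?_⟩
    rw [if_neg hζ₀.ne', add_zero, mul_one]
    refine (hQ.sum_rpow_neg_le hCmin (by positivity) s).trans ?_
    gcongr
    exact sum_range_rpow_neg_le_tsum ((one_lt_div hd₀).mpr (by linarith)) _

end QuasiUniform

theorem sq_le_of_abs_le_mul_rpow_neg {x C y p : ℝ} (hy : 0 ≤ y) (h : |x| ≤ C * y ^ (-p)) :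
    x ^ 2 ≤ C ^ 2 * y ^ (-(2 * p)) := by
  calc x ^ 2 = |x| ^ 2 := (sq_abs x).symm
    _ ≤ (C * y ^ (-p)) ^ 2 := pow_le_pow_left₀ (abs_nonneg x) h 2
    _ = C ^ 2 * y ^ (-(2 * p)) := by
      rw [mul_pow, ← rpow_mul_natCast hy]
      ring_nf

theorem stmt13_general (d : ℕ) (Cmin Cmax C ζ : ℝ)
    (hd : 1 ≤ d) (hCmin : 0 < Cmin) (hC : 0 < C) (hζ : 0 ≤ ζ) :
    ∃ A A' : ℝ, 0 < A ∧ 0 < A' ∧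
      ∀ (n : ℕ) (D : Finset (Pt d)), QuasiUniform d n Cmin Cmax D →
        ∀ Ψ : Matrix D D ℝ, Ψ.IsSymm →
          (∀ s t : D,
            |Ψ s t| ≤ C * (1 + (Nof d n : ℝ) * ‖(s : Pt d) - (t : Pt d)‖) ^ (-((d : ℝ) + ζ))) →
          opNorm Ψ ≤ A * (1 + if ζ = 0 then Real.log n else 0) ∧
          frobNorm Ψ ≤ A' * Real.sqrt n := by
  obtain ⟨K, hK, hsum⟩ := exists_sum_rpow_neg_le_of_quasiUniform (Cmax := Cmax) hd hCmin hζ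
  -- the squared entries decay with exponent `2 (d + ζ) = d + (d + 2ζ)`
  obtain ⟨K₂, hK₂, hsum₂⟩ := exists_sum_rpow_neg_le_of_quasiUniform (Cmax := Cmax) hd hCmin
    (by positivity : (0 : ℝ) ≤ d + 2 * ζ)
  refine ⟨C * K, C * √K₂, by positivity, by positivity, fun n D hQ Ψ hΨ hdecay => ⟨?_, ?_⟩⟩
  · refine opNorm_le_of_isSymm_of_abs_row_sum_le hΨ (by positivity) fun s => ?_
    calc ∑ t, |Ψ s t|
          ≤ C * ∑ t : D, (1 + Nof d n * ‖(s : Pt d) - t‖) ^ (-((d : ℝ) + ζ)) := by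
          rw [mul_sum]; exact sum_le_sum fun t _ => hdecay s t
      _ ≤ C * K * (1 + if ζ = 0 then log n else 0) := by
          rw [mul_assoc]; gcongr; exact hsum n D hQ s
  · have hrow : ∀ s, ∑ t, Ψ s t ^ 2 ≤ C ^ 2 * K₂ := fun s => calc
      ∑ t, Ψ s t ^ 2 ≤
          C ^ 2 * ∑ t : D, (1 + Nof d n * ‖(s : Pt d) - t‖) ^ (-((d : ℝ) + (d + 2 * ζ))) := by
          rw [mul_sum]
          exact sum_le_sum fun t _ =>
            (sq_le_of_abs_le_mul_rpow_neg (by positivity) (hdecay s t)).trans_eq (by ring_nf)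
      _ ≤ C ^ 2 * (K₂ * (1 + if (d : ℝ) + 2 * ζ = 0 then log n else 0)) := by
          gcongr; exact hsum₂ n D hQ s
      _ = C ^ 2 * K₂ := by rw [if_neg (by positivity), add_zero, mul_one]
    have hcard : Fintype.card D = n := (Fintype.card_coe D).trans hQ.1
    calc frobNorm Ψ ≤ √(C ^ 2 * K₂) * √(Fintype.card D) :=
          frobNorm_le_of_sq_row_sum_le Ψ hrow
      _ = C * √K₂ * √n := by rw [hcard, sqrt_mul (sq_nonneg C), sqrt_sq hC.le]

/-- **Lemma C.2.**  A real symmetric matrix `Ψ` on a quasi-uniform set `Dₙ` whose entries decay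
like `|Ψ_{s,t}| ≤ C (1 + N‖s-t‖)^{-(d+ζ)}` satisfies the operator-norm bound
`‖Ψ‖_{2→2} ≤ A (1 + [ζ = 0] log n)` and the Frobenius-norm bound `‖Ψ‖_F ≤ A' √n`, with bounded
constants `A, A'` depending only on `C, d, ζ` and the quasi-uniformity constants. -/
theorem stmt13 (d : ℕ) (Cmin Cmax C ζ : ℝ)
    (hd : 1 ≤ d) (hCmin : 0 < Cmin) (hCC : Cmin ≤ Cmax) (hC : 0 < C) (hζ : 0 ≤ ζ) :
    ∃ A A' : ℝ, 0 < A ∧ 0 < A' ∧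
      ∀ (n : ℕ) (D : Finset (Pt d)), QuasiUniform d n Cmin Cmax D →
        ∀ Ψ : Matrix D D ℝ, Ψ.IsSymm →
          (∀ s t : D,
            |Ψ s t| ≤ C * (1 + (Nof d n : ℝ) * ‖(s : Pt d) - (t : Pt d)‖) ^ (-((d : ℝ) + ζ))) →
          opNorm Ψ ≤ A * (1 + if ζ = 0 then Real.log n else 0) ∧
          frobNorm Ψ ≤ A' * Real.sqrt n :=
  stmt13_general d Cmin Cmax C ζ hd hCmin hC hζ
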